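/- arXiv:2007.05923 — 3 statements merged into one kernel-verified Lean document; each statement's English description precedes it below -/
import Mathlib

section
/- Let q = 2^m with m even. Then the number of nonzero cubic residues x in GF(q)^* with absolute trace Tr_{q/2}(x) = 0 equals (2^m − 2 + (−2)^(m/2+1))/6. -/
/-!
Write `ψ x = (-1) ^ Tr x`, `S = ∑ x, ψ (x ^ 3)` and `N` for the number of nonzero cubes of
trace zero. As `m` is even, `3 ∣ q - 1`, so cubing is
three-to-one on `GF(q)ˣ`; counting the zeros of `Tr (x ^ 3)` gives `S = 2 (1 + 3 N) - q`.
Expanding `S ^ 2` with `y = x + u` and using `Tr (a ^ 2) = Tr a`,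
`S ^ 2 = ∑ u, ψ (u ^ 3) ∑ x, ψ (x ^ 2 (u + u ^ 4))`; the inner sum vanishes unless `u ^ 4 = u`,
i.e. `u ∈ GF(4)`, whence `S ^ 2 = 4 q` and `S = ± 2 ^ (m / 2 + 1)`. The sign is forced by
`S ≡ 2 - q ≡ 1 (mod 3)`.
-/
open Finset Polynomial Module

theorem card_nthRootsFinset_of_ne_zero {R : Type*} [CommRing R] [IsDomain R] {n : ℕ} {ζ : R}
    (hζ : IsPrimitiveRoot ζ n) {a z : R} (ha : a ≠ 0) (hz : z ^ n = a) :
    #(nthRootsFinset n a) = n := by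
  classical
  have hcard := hζ.card_nthRoots a
  rw [if_pos ⟨z, hz⟩] at hcard
  rw [nthRootsFinset, ← hcard]
  convert Multiset.toFinset_card_of_nodup (hζ.nthRoots_nodup ha)

section PowerFibers

variable {F : Type*} [Field F] [Fintype F] [DecidableEq F]

theorem card_filter_pow_eq_mul_card {n : ℕ} (hn : 0 < n) {ζ : F} (hζ : IsPrimitiveRoot ζ n)
    (P : F → Prop) [DecidablePred P] :
    #{z | z ≠ 0 ∧ P (z ^ n)} = n * #{x | x ≠ 0 ∧ (∃ z, z ≠ 0 ∧ z ^ n = x) ∧ P x} := by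
  rw [card_eq_sum_card_fiberwise (f := (· ^ n)), sum_const_nat, mul_comm]
  · rintro x hx
    simp only [mem_filter, mem_univ, true_and] at hx
    obtain ⟨hx0, ⟨z, -, hz⟩, hPx⟩ := hx
    refine (congrArg card ?_).trans (card_nthRootsFinset_of_ne_zero hζ hx0 hz)
    ext y
    simp only [mem_filter, mem_univ, true_and, mem_nthRootsFinset hn]
    constructor
    · exact And.right
    · rintro rfl
      exact ⟨⟨fun hy => hx0 (by rw [hy, zero_pow hn.ne']), hPx⟩, rfl⟩
  · rintro z hz
    simp only [coe_filter, mem_univ, true_and, Set.mem_ofPred_eq] at hz ⊢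
    exact ⟨pow_ne_zero n hz.1, ⟨z, hz.1, rfl⟩, hz.2⟩

theorem FiniteField.exists_isPrimitiveRoot_of_dvd {n : ℕ} (hn : n ∣ Fintype.card F - 1) :
    ∃ ζ : F, IsPrimitiveRoot ζ n := by
  obtain ⟨g, hg⟩ := IsCyclic.exists_ofOrder_eq_natCard (α := Fˣ)
  rw [Nat.card_eq_fintype_card, Fintype.card_units] at hg
  have hq : Fintype.card F - 1 ≠ 0 := by have := Fintype.one_lt_card (α := F); omega
  obtain ⟨d, hd⟩ := hn
  have hd0 : d ≠ 0 := by rintro rfl; exact hq hd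
  refine ⟨(g ^ d : Fˣ), IsPrimitiveRoot.coe_units_iff.mpr ?_⟩
  have hord := orderOf_pow_of_dvd hd0 (by rw [hg, hd]; exact dvd_mul_left d n)
  rw [hg, hd, Nat.mul_div_cancel _ (Nat.pos_of_ne_zero hd0)] at hord
  exact hord ▸ IsPrimitiveRoot.orderOf _

end PowerFibers

section TraceCharacter

variable (F : Type*) [Field F] [Algebra (ZMod 2) F]

noncomputable def traceChar : AddChar F ℤ :=
  (AddChar.zmodChar 2 (by norm_num : (-1 : ℤ) ^ 2 = 1)).compAddMonoidHom
    (Algebra.trace (ZMod 2) F).toAddMonoidHom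

variable {F}

theorem traceChar_apply (x : F) :
    traceChar F x = if Algebra.trace (ZMod 2) F x = 0 then 1 else -1 := by
  change (-1 : ℤ) ^ (Algebra.trace (ZMod 2) F x).val = _
  generalize Algebra.trace (ZMod 2) F x = t
  revert t
  decide

theorem traceChar_one (h : Even (finrank (ZMod 2) F)) : traceChar F 1 = 1 := by
  rw [traceChar_apply, ← map_one (algebraMap (ZMod 2) F), Algebra.trace_algebraMap, nsmul_eq_mul,
    mul_one, (ZMod.natCast_eq_zero_iff_even).mpr h, if_pos rfl]

theorem sum_traceChar_comp {α : Type*} [Fintype α] (f : α → F) :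
    ∑ a, traceChar F (f a) = 2 * #{a | Algebra.trace (ZMod 2) F (f a) = 0} - Fintype.card α := by
  simp only [traceChar_apply]
  rw [sum_ite, sum_const, sum_const, ← card_univ (α := α),
    ← card_filter_add_card_filter_not (s := univ) (fun a => Algebra.trace (ZMod 2) F (f a) = 0)]
  push_cast
  ring

variable [Finite F]

theorem traceChar_sq (x : F) : traceChar F (x ^ 2) = traceChar F x := by
  have h := Algebra.trace_eq_of_algEquiv (FiniteField.frobeniusAlgEquivOfAlgebraic (ZMod 2) F) x
  rw [FiniteField.coe_frobeniusAlgEquivOfAlgebraic, ZMod.card] at h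
  simp only [traceChar_apply, h]

theorem traceChar_isPrimitive : (traceChar F).IsPrimitive := by
  refine AddChar.IsPrimitive.of_ne_one (AddChar.ne_one_iff.mpr ?_)
  obtain ⟨b, hb⟩ : ∃ b : F, Algebra.trace (ZMod 2) F b ≠ 0 := by
    by_contra! h
    exact one_ne_zero ((traceForm_nondegenerate (ZMod 2) F).1 1 fun y => by
      simpa [Algebra.traceForm_apply] using h y)
  exact ⟨b, by simp [traceChar_apply, hb]⟩

end TraceCharacter

section CubicWeilSum

variable {F : Type*} [Field F] [Fintype F] [Algebra (ZMod 2) F]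

theorem sum_traceChar_sq_mul (c : F) :
    ∑ x, traceChar F (x ^ 2 * c) = ∑ x, traceChar F (x * c) := by
  have hsq := (FiniteField.frobeniusAlgEquivOfAlgebraic (ZMod 2) F).bijective
  rw [FiniteField.coe_frobeniusAlgEquivOfAlgebraic, ZMod.card] at hsq
  exact Fintype.sum_bijective _ hsq _ _ fun _ => rfl

theorem traceChar_add_pow_three (x u : F) :
    traceChar F (x ^ 3) * traceChar F ((x + u) ^ 3) =
      traceChar F (x ^ 2 * (u + u ^ 4)) * traceChar F (u ^ 3) := by
  have : CharP F 2 := charP_of_injective_algebraMap' (ZMod 2) 2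
  rw [← AddChar.map_add_eq_mul, ← AddChar.map_add_eq_mul]
  calc traceChar F (x ^ 3 + (x + u) ^ 3)
      = traceChar F (x ^ 2 * u + u ^ 3 + x * u ^ 2) := by
        congr 1
        linear_combination (x ^ 3 + x ^ 2 * u + x * u ^ 2) * CharTwo.two_eq_zero (R := F)
    _ = traceChar F (x ^ 2 * u + u ^ 3 + (x * u ^ 2) ^ 2) := by
        simp only [AddChar.map_add_eq_mul, traceChar_sq]
    _ = traceChar F (x ^ 2 * (u + u ^ 4) + u ^ 3) := by ring_nf

theorem sum_traceChar_pow_three_sq [DecidableEq F] :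
    (∑ x : F, traceChar F (x ^ 3)) ^ 2 =
      Fintype.card F * ∑ u ∈ {u : F | u ^ 4 = u}, traceChar F (u ^ 3) := by
  have : CharP F 2 := charP_of_injective_algebraMap' (ZMod 2) 2
  calc (∑ x : F, traceChar F (x ^ 3)) ^ 2
      = ∑ x : F, ∑ u : F, traceChar F (x ^ 3) * traceChar F ((x + u) ^ 3) := by
        rw [sq, sum_mul_sum]
        exact sum_congr rfl fun x _ => (Fintype.sum_equiv (Equiv.addLeft x) _ _ fun _ => rfl).symm
    _ = ∑ u : F, traceChar F (u ^ 3) * ∑ x : F, traceChar F (x * (u + u ^ 4)) := by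
        rw [sum_comm]
        refine sum_congr rfl fun u _ => ?_
        rw [← sum_traceChar_sq_mul, mul_sum]
        exact sum_congr rfl fun x _ => by rw [traceChar_add_pow_three, mul_comm]
    _ = ∑ u : F, if u ^ 4 = u then Fintype.card F * traceChar F (u ^ 3) else 0 := by
        refine sum_congr rfl fun u _ => ?_
        rw [AddChar.sum_mulShift _ traceChar_isPrimitive]
        have : u + u ^ 4 = 0 ↔ u ^ 4 = u := by
          rw [add_eq_zero_iff_eq_neg, CharTwo.neg_eq, eq_comm]
        split_ifs <;> simp_all [mul_comm]
    _ = _ := by rw [← sum_filter, mul_sum]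

end CubicWeilSum

theorem Int.eq_of_sq_eq_sq_of_modEq_three {a b : ℤ} (hsq : a ^ 2 = b ^ 2) (ha : a ≡ 1 [ZMOD 3])
    (hb : b ≡ 1 [ZMOD 3]) : a = b := by
  rcases sq_eq_sq_iff_eq_or_eq_neg.mp hsq with h | h
  · exact h
  · unfold Int.ModEq at ha hb
    omega

section EvenDegree

variable {F : Type*} [Field F] [Fintype F] [Algebra (ZMod 2) F] {k : ℕ}

theorem card_eq_four_pow_of_finrank_eq (hk : finrank (ZMod 2) F = 2 * k) :
    Fintype.card F = 4 ^ k := by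
  rw [Module.card_eq_pow_finrank (K := ZMod 2), ZMod.card, hk, pow_mul]
  norm_num

variable [DecidableEq F]

theorem exists_isPrimitiveRoot_three_of_finrank_eq (hk : finrank (ZMod 2) F = 2 * k) :
    ∃ ζ : F, IsPrimitiveRoot ζ 3 :=
  FiniteField.exists_isPrimitiveRoot_of_dvd <| by
    simpa [card_eq_four_pow_of_finrank_eq hk] using Nat.sub_dvd_pow_sub_pow 4 1 k

theorem sum_traceChar_pow_three_sq_of_finrank_eq (hk : finrank (ZMod 2) F = 2 * k) :
    (∑ x : F, traceChar F (x ^ 3)) ^ 2 = 4 * Fintype.card F := by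
  obtain ⟨ζ, hζ⟩ := exists_isPrimitiveRoot_three_of_finrank_eq hk
  have hfix : ({u : F | u ^ 4 = u} : Finset F) = insert 0 (nthRootsFinset 3 (1 : F)) := by
    ext u
    rw [mem_filter, and_iff_right (mem_univ u), mem_insert, mem_nthRootsFinset three_pos,
      show u ^ 4 = u * u ^ 3 by ring, mul_right_eq_self₀, or_comm]
  have hone : ∀ u ∈ nthRootsFinset 3 (1 : F), traceChar F (u ^ 3) = 1 := fun u hu => by
    rw [(mem_nthRootsFinset three_pos 1).mp hu, traceChar_one ⟨k, by rw [hk]; ring⟩]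
  rw [sum_traceChar_pow_three_sq, hfix, sum_insert (by simp [mem_nthRootsFinset]),
    sum_congr rfl hone, sum_const, hζ.card_nthRootsFinset]
  simp only [zero_pow three_ne_zero, AddChar.map_zero_eq_one, nsmul_eq_mul, Nat.cast_ofNat, mul_one]
  ring

theorem sum_traceChar_pow_three_eq_six_mul_card (hk : finrank (ZMod 2) F = 2 * k) :
    ∑ x : F, traceChar F (x ^ 3) =
      6 * #{x | x ≠ 0 ∧ (∃ z, z ≠ 0 ∧ z ^ 3 = x) ∧ Algebra.trace (ZMod 2) F x = 0} + 2 -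
        Fintype.card F := by
  obtain ⟨ζ, hζ⟩ := exists_isPrimitiveRoot_three_of_finrank_eq hk
  have hzero : #{x : F | Algebra.trace (ZMod 2) F (x ^ 3) = 0} =
      #{x : F | x ≠ 0 ∧ Algebra.trace (ZMod 2) F (x ^ 3) = 0} + 1 := by
    rw [← card_insert_of_notMem (a := 0) (by simp)]
    congr 1
    ext x
    by_cases hx : x = 0 <;> simp [hx]
  rw [sum_traceChar_comp, hzero,
    card_filter_pow_eq_mul_card three_pos hζ (Algebra.trace (ZMod 2) F · = 0)]
  push_cast
  ring

theorem sum_traceChar_pow_three (hk : finrank (ZMod 2) F = 2 * k) :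
    ∑ x : F, traceChar F (x ^ 3) = (-2) ^ (k + 1) := by
  have hq : (Fintype.card F : ℤ) ≡ 1 [ZMOD 3] := by
    rw [card_eq_four_pow_of_finrank_eq hk]
    simpa using (show (4 : ℤ) ≡ 1 [ZMOD 3] by decide).pow k
  apply Int.eq_of_sq_eq_sq_of_modEq_three
  · rw [sum_traceChar_pow_three_sq_of_finrank_eq hk, card_eq_four_pow_of_finrank_eq hk, ← pow_mul,
      pow_mul']
    push_cast
    ring
  · rw [sum_traceChar_pow_three_eq_six_mul_card hk]
    unfold Int.ModEq at hq ⊢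
    omega
  · simpa using (show (-2 : ℤ) ≡ 1 [ZMOD 3] by decide).pow (k + 1)

theorem six_mul_card_cubes_trace_eq_zero (hk : finrank (ZMod 2) F = 2 * k) :
    6 * (#{x | x ≠ 0 ∧ (∃ z, z ≠ 0 ∧ z ^ 3 = x) ∧ Algebra.trace (ZMod 2) F x = 0} : ℤ) =
      Fintype.card F - 2 + (-2) ^ (k + 1) := by
  linarith [sum_traceChar_pow_three_eq_six_mul_card hk, sum_traceChar_pow_three hk]

end EvenDegree

theorem stmt_2 (m : ℕ) (hm : 1 ≤ m) (hmeven : m % 2 = 0) :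
    (6 : ℤ) * (Nat.card {x : GaloisField 2 m //
        x ≠ 0 ∧ (∃ z : GaloisField 2 m, z ≠ 0 ∧ z ^ 3 = x) ∧
          Algebra.trace (ZMod 2) (GaloisField 2 m) x = 0} : ℤ) =
      2 ^ m - 2 + (-2 : ℤ) ^ (m / 2 + 1) := by
  let _ := Classical.decEq (GaloisField 2 m)
  let _ := Fintype.ofFinite (GaloisField 2 m)
  have hk : finrank (ZMod 2) (GaloisField 2 m) = 2 * (m / 2) := by
    rw [GaloisField.finrank 2 (by omega)]
    omega
  have hcard : (Fintype.card (GaloisField 2 m) : ℤ) = 2 ^ m := by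
    rw [← Nat.card_eq_fintype_card, GaloisField.card 2 m (by omega)]
    norm_num
  rw [Nat.card_eq_fintype_card, Fintype.card_subtype, six_mul_card_cubes_trace_eq_zero hk, hcard]
end

section
/- Let q = 2^m with m ≥ 4, e a positive integer with gcd(m,e) = 1, and let x₁, x₂, x₃, x₄ be four distinct elements of GF(q). Set S₁ = x₁+x₂+x₃+x₄ and S = x₁^(2^e+1)+x₂^(2^e+1)+x₃^(2^e+1)+x₄^(2^e+1). Then the number N of pairs (x,y) ∈ GF(q)² with x + y = S₁, x^(2^e+1) + y^(2^e+1) = S, and {x₁,x₂,x₃,x₄,x,y} of size 6, satisfies: N = 2 if S₁ ≠ 0 and Tr_{q/2}(S/S₁^(2^e+1) + 1) = 0, and N = 0 otherwise. -/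
/-!
A pair `(x, x + s)` with `s = x₁ + x₂ + x₃ + x₄ ≠ 0` solves the system exactly when `t = x / s`
solves `t ^ 2 ^ e + t = S / s ^ (2 ^ e + 1) + 1`. Since `gcd(m, e) = 1`, the additive map
`t ↦ t ^ 2 ^ e + t` has kernel `GF(2)`, so its image has index 2; it lies in the kernel of the
absolute trace, hence equals it, and the equation has two solutions or none according to the trace
of the right-hand side. The APN property of `x ^ (2 ^ e + 1)` rules out that a solution meets
`{x₁, x₂, x₃, x₄}`, so the six points are distinct exactly when `x ≠ x + s`, i.e. `s ≠ 0`.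
-/

open Function

theorem pairwise_ne_of_ncard_eq_four {α : Type*} {a b c d : α}
    (h : ({a, b, c, d} : Set α).ncard = 4) :
    a ≠ b ∧ a ≠ c ∧ a ≠ d ∧ b ≠ c ∧ b ≠ d ∧ c ≠ d := by
  classical
  have hset : ({a, b, c, d} : Set α) = ↑([a, b, c, d].toFinset) := by ext; simp
  rw [hset, Set.ncard_coe_finset] at h
  simpa [and_assoc] using Multiset.toFinset_card_eq_card_iff_nodup.mp h

theorem ncard_union_pair_eq_add_two_iff {α : Type*} [Finite α] {s : Set α} {u v : α}
    (hu : u ∉ s) (hv : v ∉ s) : (s ∪ {u, v}).ncard = s.ncard + 2 ↔ u ≠ v := by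
  rw [Set.ncard_union_eq (by simp [Set.disjoint_insert_right, hu, hv])]
  constructor
  · rintro h rfl
    simp at h
  · intro h
    rw [Set.ncard_pair h]

section

variable {K : Type*} [Field K]

theorem eq_zero_or_one_of_pow_two_pow_eq_self [Finite K] {m e : ℕ} (hK : Nat.card K = 2 ^ m)
    (hme : m.Coprime e) {z : K} (hz : z ^ 2 ^ e = z) : z = 0 ∨ z = 1 := by
  have : Fintype K := Fintype.ofFinite K
  have periodic {n : ℕ} (h : z ^ 2 ^ n = z) : IsPeriodicPt (· ^ 2) n z := by
    simpa [IsPeriodicPt, IsFixedPt, pow_iterate] using h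
  have hm : z ^ 2 ^ m = z := by rw [← hK, Nat.card_eq_fintype_card, FiniteField.pow_card]
  have h1 := (periodic hm).gcd (periodic hz)
  rw [hme.gcd_eq_one] at h1
  have hidem : z * z = z := by simpa [IsPeriodicPt, IsFixedPt, sq] using h1
  exact IsIdempotentElem.iff_eq_zero_or_one.mp hidem

theorem trace_pow_two_pow [Finite K] [Algebra (ZMod 2) K] (x : K) (n : ℕ) :
    Algebra.trace (ZMod 2) K (x ^ 2 ^ n) = Algebra.trace (ZMod 2) K x := by
  have := Algebra.trace_eq_of_algEquiv (FiniteField.frobeniusAlgEquivOfAlgebraic (ZMod 2) K ^ n) x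
  rwa [AlgEquiv.coe_pow, FiniteField.coe_frobeniusAlgEquivOfAlgebraic_iterate, ZMod.card] at this

variable [CharP K 2]

theorem add_pow_two_pow_add_one (x a : K) (e : ℕ) :
    (x + a) ^ (2 ^ e + 1) =
      x ^ (2 ^ e + 1) + a * x ^ 2 ^ e + a ^ 2 ^ e * x + a ^ (2 ^ e + 1) := by
  rw [pow_succ, add_pow_char_pow]
  ring

theorem mul_add_self_pow_add_mul_pow (s t : K) (e : ℕ) :
    (s * t + s) ^ (2 ^ e + 1) + (s * t) ^ (2 ^ e + 1) =
      s ^ (2 ^ e + 1) * (t ^ 2 ^ e + t + 1) := by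
  rw [add_pow_two_pow_add_one, mul_pow, mul_pow, pow_succ s]
  grind

theorem card_add_eq_pow_add_eq {e : ℕ} {s : K} (hs : s ≠ 0) (S : K) :
    Nat.card {xy : K × K // xy.1 + xy.2 = s ∧ xy.1 ^ (2 ^ e + 1) + xy.2 ^ (2 ^ e + 1) = S} =
      Nat.card {t : K // t ^ 2 ^ e + t = S / s ^ (2 ^ e + 1) + 1} := by
  have key (t : K) : (s * t) ^ (2 ^ e + 1) + (s * t + s) ^ (2 ^ e + 1) = S ↔
      t ^ 2 ^ e + t = S / s ^ (2 ^ e + 1) + 1 := by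
    rw [add_comm, mul_add_self_pow_add_mul_pow, mul_comm, ← eq_div_iff (pow_ne_zero _ hs)]
    grind
  refine Nat.card_congr
    { toFun := fun ⟨(x, y), hsum, hpow⟩ => ⟨x / s, (key _).mp <| by
        rwa [mul_div_cancel₀ _ hs, show x + s = y by grind]⟩
      invFun := fun t => ⟨(s * t.1, s * t.1 + s), by grind, (key t.1).mpr t.2⟩
      left_inv := fun ⟨(x, y), hsum, hpow⟩ => by
        ext <;> simp only [mul_div_cancel₀ _ hs]
        grind
      right_inv := fun t => by
        ext
        exact mul_div_cancel_left₀ _ hs }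

def frobeniusPowAddId (e : ℕ) : K →+ K where
  toFun t := t ^ 2 ^ e + t
  map_zero' := by simp
  map_add' x y := by
    simp only [add_pow_char_pow]
    ring

theorem frobeniusPowAddId_apply (e : ℕ) (t : K) : frobeniusPowAddId e t = t ^ 2 ^ e + t := rfl

variable [Finite K] {m e : ℕ}

theorem mem_ker_frobeniusPowAddId (hK : Nat.card K = 2 ^ m) (hme : m.Coprime e) {t : K} :
    t ∈ (frobeniusPowAddId e).ker ↔ t = 0 ∨ t = 1 := by
  rw [AddMonoidHom.mem_ker, frobeniusPowAddId_apply, CharTwo.add_eq_zero]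
  refine ⟨eq_zero_or_one_of_pow_two_pow_eq_self hK hme, ?_⟩
  rintro (rfl | rfl) <;> simp

theorem range_frobeniusPowAddId [Algebra (ZMod 2) K] (hK : Nat.card K = 2 ^ m)
    (hme : m.Coprime e) :
    (frobeniusPowAddId (K := K) e).range = (Algebra.trace (ZMod 2) K).toAddMonoidHom.ker := by
  set L := frobeniusPowAddId (K := K) e
  set T := (Algebra.trace (ZMod 2) K).toAddMonoidHom
  have hle : L.range ≤ T.ker := by
    rintro _ ⟨t, rfl⟩
    simp [L, T, frobeniusPowAddId_apply, trace_pow_two_pow, CharTwo.add_self_eq_zero]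
  have hL : Nat.card L.ker = 2 := by
    have : (L.ker : Set K) = {0, 1} := by
      ext
      exact mem_ker_frobeniusPowAddId hK hme
    rw [← SetLike.coe_sort_coe, this, Nat.card_coe_set_eq, Set.ncard_pair zero_ne_one]
  have hT : T.ker.index = 2 := by
    rw [AddSubgroup.index_ker, AddMonoidHom.range_eq_top.mpr (Algebra.trace_surjective _ _),
      Nat.card_congr AddSubgroup.topEquiv.toEquiv, Nat.card_zmod]
  refine AddSubgroup.eq_of_le_of_card_ge hle (Nat.le_of_eq ?_)
  have hcardL := L.ker.card_mul_index
  have hcardT := T.ker.card_mul_index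
  rw [AddSubgroup.index_ker, hL] at hcardL
  rw [hT] at hcardT
  omega

theorem card_pow_two_pow_add_self_eq [Algebra (ZMod 2) K] (hK : Nat.card K = 2 ^ m)
    (hme : m.Coprime e) (c : K) :
    Nat.card {t : K // t ^ 2 ^ e + t = c} =
      if Algebra.trace (ZMod 2) K c = 0 then 2 else 0 := by
  split_ifs with hc
  · obtain ⟨t₀, ht₀⟩ : c ∈ (frobeniusPowAddId (K := K) e).range := by
      rw [range_frobeniusPowAddId hK hme]
      exact hc
    have hsol : {t : K | t ^ 2 ^ e + t = c} = {t₀, t₀ + 1} := by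
      ext t
      have := mem_ker_frobeniusPowAddId hK hme (t := t + t₀)
      rw [AddMonoidHom.mem_ker, map_add, ht₀, frobeniusPowAddId_apply] at this
      simp only [Set.mem_ofPred_eq, Set.mem_insert_iff, Set.mem_singleton_iff]
      grind
    rw [← Set.coe_ofPred, hsol, Nat.card_coe_set_eq, Set.ncard_pair (by simp)]
  · rw [Nat.card_eq_zero]
    refine .inl ⟨fun ⟨t, ht⟩ => hc ?_⟩
    rw [← ht, map_add, trace_pow_two_pow, CharTwo.add_self_eq_zero]

theorem eq_or_eq_add_of_pow_add_one_add_eq (hK : Nat.card K = 2 ^ m) (hme : m.Coprime e)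
    {a x y : K} (ha : a ≠ 0)
    (h : (x + a) ^ (2 ^ e + 1) + x ^ (2 ^ e + 1) = (y + a) ^ (2 ^ e + 1) + y ^ (2 ^ e + 1)) :
    y = x ∨ y = x + a := by
  have key : ((x + y) / a) ^ 2 ^ e = (x + y) / a := by
    rw [div_pow, add_pow_char_pow, div_eq_div_iff (pow_ne_zero _ ha) ha]
    simp only [add_pow_two_pow_add_one] at h
    grind
  rcases eq_zero_or_one_of_pow_two_pow_eq_self hK hme key with h0 | h1
  · left
    grind [div_eq_zero_iff]
  · right
    grind [div_eq_one_iff_eq]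

theorem add_add_pow_ne_of_pairwise_ne (hK : Nat.card K = 2 ^ m) (hme : m.Coprime e)
    {a b c : K} (hab : a ≠ b) (hbc : b ≠ c) (hac : a ≠ c) :
    (a + b + c) ^ (2 ^ e + 1) ≠ a ^ (2 ^ e + 1) + b ^ (2 ^ e + 1) + c ^ (2 ^ e + 1) := by
  intro h
  have hα : a + b ≠ 0 := fun h0 => hab (by grind)
  have hba : b + (a + b) = a := by grind
  have hca : c + (a + b) = a + b + c := by ring
  have := eq_or_eq_add_of_pow_add_one_add_eq hK hme hα (x := b) (y := c)
    (by rw [hba, hca, h]; grind)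
  grind

theorem notMem_of_add_eq_of_pow_add_eq (hK : Nat.card K = 2 ^ m) (hme : m.Coprime e)
    {x₁ x₂ x₃ x₄ u v : K} (hdist : ({x₁, x₂, x₃, x₄} : Set K).ncard = 4)
    (hsum : u + v = x₁ + x₂ + x₃ + x₄)
    (hpow : u ^ (2 ^ e + 1) + v ^ (2 ^ e + 1) =
      x₁ ^ (2 ^ e + 1) + x₂ ^ (2 ^ e + 1) + x₃ ^ (2 ^ e + 1) + x₄ ^ (2 ^ e + 1)) :
    u ∉ ({x₁, x₂, x₃, x₄} : Set K) := by
  obtain ⟨h12, h13, h14, h23, h24, h34⟩ := pairwise_ne_of_ncard_eq_four hdist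
  simp only [Set.mem_insert_iff, Set.mem_singleton_iff]
  rintro (rfl | rfl | rfl | rfl)
  · refine add_add_pow_ne_of_pairwise_ne hK hme h23 h34 h24 ?_
    rw [show x₂ + x₃ + x₄ = v by grind]; grind
  · refine add_add_pow_ne_of_pairwise_ne hK hme h13 h34 h14 ?_
    rw [show x₁ + x₃ + x₄ = v by grind]; grind
  · refine add_add_pow_ne_of_pairwise_ne hK hme h12 h24 h14 ?_
    rw [show x₁ + x₂ + x₄ = v by grind]; grind
  · refine add_add_pow_ne_of_pairwise_ne hK hme h12 h23 h13 ?_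
    rw [show x₁ + x₂ + x₃ = v by grind]; grind

theorem ncard_insert_eq_six_iff (hK : Nat.card K = 2 ^ m) (hme : m.Coprime e)
    {x₁ x₂ x₃ x₄ : K} (hdist : ({x₁, x₂, x₃, x₄} : Set K).ncard = 4) {s S u v : K}
    (hs : s = x₁ + x₂ + x₃ + x₄)
    (hS : S = x₁ ^ (2 ^ e + 1) + x₂ ^ (2 ^ e + 1) + x₃ ^ (2 ^ e + 1) + x₄ ^ (2 ^ e + 1))
    (hsum : u + v = s) (hpow : u ^ (2 ^ e + 1) + v ^ (2 ^ e + 1) = S) :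
    ({x₁, x₂, x₃, x₄, u, v} : Set K).ncard = 6 ↔ s ≠ 0 := by
  subst hs hS
  have hu := notMem_of_add_eq_of_pow_add_eq hK hme hdist hsum hpow
  have hv := notMem_of_add_eq_of_pow_add_eq hK hme hdist (by rwa [add_comm v u])
    (by rwa [add_comm (v ^ _)])
  have hunion : ({x₁, x₂, x₃, x₄, u, v} : Set K) = {x₁, x₂, x₃, x₄} ∪ {u, v} := by
    simp only [Set.insert_union, Set.singleton_union]
  rw [hunion, ← hsum, ne_eq, CharTwo.add_eq_zero, ← ne_eq,
    ← ncard_union_pair_eq_add_two_iff hu hv, hdist]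

theorem card_add_eq_pow_add_eq_ncard_eq_six [Algebra (ZMod 2) K] [DecidableEq K]
    (hK : Nat.card K = 2 ^ m) (hme : m.Coprime e)
    {x₁ x₂ x₃ x₄ : K} (hdist : ({x₁, x₂, x₃, x₄} : Set K).ncard = 4) {s S : K}
    (hs : s = x₁ + x₂ + x₃ + x₄)
    (hS : S = x₁ ^ (2 ^ e + 1) + x₂ ^ (2 ^ e + 1) + x₃ ^ (2 ^ e + 1) + x₄ ^ (2 ^ e + 1)) :
    Nat.card {xy : K × K // xy.1 + xy.2 = s ∧ xy.1 ^ (2 ^ e + 1) + xy.2 ^ (2 ^ e + 1) = S ∧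
      ({x₁, x₂, x₃, x₄, xy.1, xy.2} : Set K).ncard = 6} =
      if s ≠ 0 ∧ Algebra.trace (ZMod 2) K (S / s ^ (2 ^ e + 1) + 1) = 0 then 2 else 0 := by
  have hsix {u v : K} := ncard_insert_eq_six_iff (u := u) (v := v) hK hme hdist hs hS
  by_cases hs0 : s = 0
  · rw [if_neg (fun h => h.1 hs0), Nat.card_eq_zero]
    exact .inl ⟨fun ⟨_, hsum, hpow, h6⟩ => (hsix hsum hpow).mp h6 hs0⟩
  · rw [Nat.card_congr (Equiv.subtypeEquivRight fun xy => ?_), card_add_eq_pow_add_eq hs0 S,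
      card_pow_two_pow_add_self_eq hK hme]
    · simp only [ne_eq, hs0, not_false_eq_true, true_and]
    · exact ⟨fun h => ⟨h.1, h.2.1⟩, fun h => ⟨h.1, h.2, (hsix h.1 h.2).mpr hs0⟩⟩

end

theorem stmt_10_general (m e : ℕ) (hm : 4 ≤ m) (hge : Nat.gcd m e = 1)
    (x₁ x₂ x₃ x₄ : GaloisField 2 m)
    (hdist : ({x₁, x₂, x₃, x₄} : Set (GaloisField 2 m)).ncard = 4)
    (S1 S : GaloisField 2 m)
    (hS1 : S1 = x₁ + x₂ + x₃ + x₄)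
    (hS : S = x₁ ^ (2 ^ e + 1) + x₂ ^ (2 ^ e + 1) + x₃ ^ (2 ^ e + 1) + x₄ ^ (2 ^ e + 1)) :
    (S1 ≠ 0 ∧ Algebra.trace (ZMod 2) (GaloisField 2 m) (S / S1 ^ (2 ^ e + 1) + 1) = 0 →
      Nat.card {xy : GaloisField 2 m × GaloisField 2 m //
        xy.1 + xy.2 = S1 ∧ xy.1 ^ (2 ^ e + 1) + xy.2 ^ (2 ^ e + 1) = S ∧
          ({x₁, x₂, x₃, x₄, xy.1, xy.2} : Set (GaloisField 2 m)).ncard = 6} = 2) ∧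
    (¬(S1 ≠ 0 ∧ Algebra.trace (ZMod 2) (GaloisField 2 m) (S / S1 ^ (2 ^ e + 1) + 1) = 0) →
      Nat.card {xy : GaloisField 2 m × GaloisField 2 m //
        xy.1 + xy.2 = S1 ∧ xy.1 ^ (2 ^ e + 1) + xy.2 ^ (2 ^ e + 1) = S ∧
          ({x₁, x₂, x₃, x₄, xy.1, xy.2} : Set (GaloisField 2 m)).ncard = 6} = 0) := by
  classical
  have hK : Nat.card (GaloisField 2 m) = 2 ^ m := GaloisField.card 2 m (by omega)
  rw [card_add_eq_pow_add_eq_ncard_eq_six hK hge hdist hS1 hS]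
  exact ⟨fun h => if_pos h, fun h => if_neg h⟩

theorem stmt_10 (m e : ℕ) (hm : 4 ≤ m) (he : 1 ≤ e) (hge : Nat.gcd m e = 1)
    (x₁ x₂ x₃ x₄ : GaloisField 2 m)
    (hdist : ({x₁, x₂, x₃, x₄} : Set (GaloisField 2 m)).ncard = 4)
    (S1 S : GaloisField 2 m)
    (hS1 : S1 = x₁ + x₂ + x₃ + x₄)
    (hS : S = x₁ ^ (2 ^ e + 1) + x₂ ^ (2 ^ e + 1) + x₃ ^ (2 ^ e + 1) + x₄ ^ (2 ^ e + 1)) :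
    (S1 ≠ 0 ∧ Algebra.trace (ZMod 2) (GaloisField 2 m) (S / S1 ^ (2 ^ e + 1) + 1) = 0 →
      Nat.card {xy : GaloisField 2 m × GaloisField 2 m //
        xy.1 + xy.2 = S1 ∧ xy.1 ^ (2 ^ e + 1) + xy.2 ^ (2 ^ e + 1) = S ∧
          ({x₁, x₂, x₃, x₄, xy.1, xy.2} : Set (GaloisField 2 m)).ncard = 6} = 2) ∧
    (¬(S1 ≠ 0 ∧ Algebra.trace (ZMod 2) (GaloisField 2 m) (S / S1 ^ (2 ^ e + 1) + 1) = 0) →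
      Nat.card {xy : GaloisField 2 m × GaloisField 2 m //
        xy.1 + xy.2 = S1 ∧ xy.1 ^ (2 ^ e + 1) + xy.2 ^ (2 ^ e + 1) = S ∧
          ({x₁, x₂, x₃, x₄, xy.1, xy.2} : Set (GaloisField 2 m)).ncard = 6} = 0) :=
  stmt_10_general m e hm hge x₁ x₂ x₃ x₄ hdist S1 S hS1 hS
end

section
/- Let q = 2^m with m ≥ 5 odd, and let C be a binary linear code of length 2^m and dimension 2m+1 whose nonzero weights are exactly 2^(m−1) − 2^((m−1)/2) (with multiplicity (2^m−1)·2^(m−1)), 2^(m−1) (with multiplicity (2^m−1)·(2^(m+1)−2^m+2)), 2^(m−1)+2^((m−1)/2) (with multiplicity (2^m−1)·2^(m−1)), and 2^m (with multiplicity 1). Then the dual code C⊥ has parameters [2^m, 2^m − 2m − 1, 6], i.e., C⊥ has minimum distance exactly 6. -/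
open Finset

/-- Hamming weight of a word. -/
noncomputable def wt {K : Type*} [Field K] {ι : Type*} [Fintype ι] (c : ι → K) : ℕ :=
  Nat.card {i : ι // c i ≠ 0}

/-- The linear functional `v ↦ ∑ i, v i * c i`. -/
noncomputable def dotL {K : Type*} [Field K] {ι : Type*} [Fintype ι] (c : ι → K) :
    (ι → K) →ₗ[K] K where
  toFun v := ∑ i, v i * c i
  map_add' u v := by simp [add_mul, Finset.sum_add_distrib]
  map_smul' r v := by simp [Finset.mul_sum, mul_assoc]

/-- The dual code of a linear code. -/
noncomputable def dualCode {K : Type*} [Field K] {ι : Type*} [Fintype ι]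
    (C : Submodule K (ι → K)) : Submodule K (ι → K) :=
  ⨅ c ∈ C, LinearMap.ker (dotL c)

/-- The punctured code of `C` on `T`. -/
noncomputable def punctureCode {K : Type*} [Field K] {ι : Type*}
    (C : Submodule K (ι → K)) (T : Finset ι) :
    Submodule K ({i : ι // i ∉ T} → K) :=
  C.map (LinearMap.funLeft K K Subtype.val)

/-- The shortened code of `C` on `T`. -/
noncomputable def shortenCode {K : Type*} [Field K] {ι : Type*}
    (C : Submodule K (ι → K)) (T : Finset ι) :
    Submodule K ({i : ι // i ∉ T} → K) :=
  (C ⊓ ⨅ i ∈ T, LinearMap.ker (LinearMap.proj i)).map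
    (LinearMap.funLeft K K Subtype.val)

/-- The number of codewords of weight `w` in a code. -/
noncomputable def numwt {K : Type*} [Field K] {ι : Type*} [Fintype ι]
    (C : Submodule K (ι → K)) (w : ℕ) : ℕ :=
  Nat.card {c : C // wt (c : ι → K) = w}

/-!
For a set `T` of `t` coordinates, the words of `C⊥` supported on `T` form the dual of `C`
punctured to `T`, so `|C⊥_T| · |C| = 2^t · |{c ∈ C : c vanishes on T}|`. Summing over all
`t`-sets turns the right-hand side into `2^t ∑_{c ∈ C} (n - wt c).choose t`, a binomial moment
of the weight distribution of `C`. Writing `2^(m-1) = s²`, so `n = 2s²` and `|C| = 8s⁴`, the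
moment for `t = 5` gives `∑_T |C⊥_T| = n.choose 5`: every 5-set supports only the zero word of
`C⊥`. For `t = 6` the sum exceeds `n.choose 6`, so some 6-set supports a nonzero word of `C⊥`.
-/

section DualCode

variable {K : Type*} [Field K] {ι : Type*} [Fintype ι]

lemma mem_dualCode {C : Submodule K (ι → K)} {v : ι → K} :
    v ∈ dualCode C ↔ ∀ c ∈ C, ∑ i, v i * c i = 0 := by
  simp [dualCode, dotL]

lemma dualCode_eq_dualCoannihilator [DecidableEq ι] (C : Submodule K (ι → K)) :
    dualCode C = (C.map (dotProductEquiv K ι : (ι → K) →ₗ[K] _)).dualCoannihilator := by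
  ext v
  simp only [mem_dualCode, Submodule.mem_dualCoannihilator, Submodule.mem_map,
    forall_exists_index, and_imp, forall_apply_eq_imp_iff₂]
  simp [dotProduct, mul_comm]

lemma finrank_dualCode_add_finrank (C : Submodule K (ι → K)) :
    Module.finrank K (dualCode C) + Module.finrank K C = Fintype.card ι := by
  classical
  rw [dualCode_eq_dualCoannihilator, ← LinearEquiv.finrank_map_eq (dotProductEquiv K ι) C,
    add_comm, Subspace.finrank_add_finrank_dualCoannihilator_eq,
    Module.finrank_fintype_fun_eq_card]

end DualCode

def vanishingOn (R : Type*) [Semiring R] {ι : Type*} (T : Set ι) : Submodule R (ι → R) :=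
  Submodule.pi T fun _ => ⊥

@[simp]
lemma mem_vanishingOn {R : Type*} [Semiring R] {ι : Type*} {T : Set ι} {v : ι → R} :
    v ∈ vanishingOn R T ↔ ∀ i ∈ T, v i = 0 := by
  simp [vanishingOn, Submodule.mem_pi]

lemma finrank_comap_eq_finrank_range_inf {K M N : Type*} [Field K] [AddCommGroup M] [Module K M]
    [AddCommGroup N] [Module K N] {f : M →ₗ[K] N} (hf : Function.Injective f)
    (q : Submodule K N) :
    Module.finrank K (q.comap f) = Module.finrank K ↥(LinearMap.range f ⊓ q) := by
  rw [← Submodule.map_comap_eq]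
  exact (Submodule.equivMapOfInjective f hf _).finrank_eq

lemma range_extendByZero_val {R : Type*} [Semiring R] {ι : Type*} (T : Finset ι) :
    LinearMap.range (Function.ExtendByZero.linearMap R (Subtype.val : T → ι)) =
      vanishingOn R (↑T)ᶜ := by
  ext v
  simp only [LinearMap.mem_range, mem_vanishingOn, Set.mem_compl_iff, Finset.mem_coe]
  constructor
  · rintro ⟨w, rfl⟩ i hi
    exact Function.extend_apply' _ _ _ (by simpa using hi)
  · intro hv
    refine ⟨fun i => v i, funext fun i => ?_⟩
    change Function.extend Subtype.val (fun i : T => v i) 0 i = v i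
    by_cases hi : i ∈ T
    · exact Subtype.val_injective.extend_apply _ _ ⟨i, hi⟩
    · rw [hv i hi, Function.extend_apply' _ _ _ (by simpa using hi), Pi.zero_apply]

section Shortening

variable {K : Type*} [Field K] {ι : Type*} [Fintype ι] (C : Submodule K (ι → K)) (T : Finset ι)

lemma finrank_map_restrict_add_finrank_inf_vanishingOn :
    Module.finrank K (C.map (LinearMap.funLeft K K (Subtype.val : T → ι))) +
      Module.finrank K ↥(C ⊓ vanishingOn K (T : Set ι)) = Module.finrank K C := by
  set r := LinearMap.funLeft K K (Subtype.val : T → ι)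
  have hker : LinearMap.ker r = vanishingOn K (T : Set ι) := by
    ext v
    simp [r, funext_iff, LinearMap.funLeft]
  have := LinearMap.finrank_range_add_finrank_ker (r.domRestrict C)
  rwa [LinearMap.range_domRestrict, LinearMap.ker_domRestrict,
    finrank_comap_eq_finrank_range_inf C.injective_subtype, Submodule.range_subtype,
    hker] at this

lemma sum_extendByZero_mul (w : T → K) (c : ι → K) :
    ∑ i, Function.extend Subtype.val w 0 i * c i = ∑ i : T, w i * c i := by
  rw [← Finset.sum_subset (Finset.subset_univ T), ← Finset.sum_coe_sort T]
  · simp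
  · intro i _ hi
    rw [Function.extend_apply' _ _ _ (by simpa using hi), Pi.zero_apply, zero_mul]

lemma dualCode_map_restrict :
    dualCode (C.map (LinearMap.funLeft K K (Subtype.val : T → ι))) =
      (dualCode C).comap (Function.ExtendByZero.linearMap K (Subtype.val : T → ι)) := by
  ext w
  simp [mem_dualCode, sum_extendByZero_mul, LinearMap.funLeft]

theorem finrank_dualCode_inf_vanishingOn_compl_add_finrank :
    Module.finrank K ↥(dualCode C ⊓ vanishingOn K (T : Set ι)ᶜ) +
      Module.finrank K C = T.card + Module.finrank K ↥(C ⊓ vanishingOn K (T : Set ι)) := by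
  have hinj : Function.Injective (Function.ExtendByZero.linearMap K (Subtype.val : T → ι)) :=
    Function.extend_injective Subtype.val_injective (0 : ι → K)
  have hdual :=
    finrank_dualCode_add_finrank (C.map (LinearMap.funLeft K K (Subtype.val : T → ι)))
  rw [dualCode_map_restrict, finrank_comap_eq_finrank_range_inf hinj, range_extendByZero_val,
    Fintype.card_coe] at hdual
  have hres := finrank_map_restrict_add_finrank_inf_vanishingOn C T
  rw [inf_comm]
  omega

end Shortening

section Counting

variable {K : Type*} [Field K] {ι : Type*} [Fintype ι]

lemma wt_eq_card_filter [DecidableEq K] (c : ι → K) : wt c = #{i | c i ≠ 0} := by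
  rw [wt, Nat.card_eq_fintype_card, Fintype.card_subtype]

lemma wt_le_card (c : ι → K) : wt c ≤ Fintype.card ι := by
  rw [wt, ← Nat.card_eq_fintype_card]
  exact Finite.card_subtype_le _

lemma card_filter_eq_zero [DecidableEq K] (c : ι → K) :
    #{i | c i = 0} = Fintype.card ι - wt c := by
  rw [wt_eq_card_filter, ← Finset.card_univ,
    ← Finset.card_filter_add_card_filter_not (s := univ) (p := fun i => c i = 0)]
  simp only [ne_eq, Nat.add_sub_cancel]

lemma wt_eq_zero_iff {c : ι → K} : wt c = 0 ↔ c = 0 := by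
  simp [wt, Finite.card_eq_zero_iff, funext_iff, isEmpty_subtype]

lemma numwt_zero (C : Submodule K (ι → K)) : numwt C 0 = 1 := by
  rw [numwt, Nat.card_eq_one_iff_exists]
  refine ⟨⟨0, wt_eq_zero_iff.mpr rfl⟩, fun c => ?_⟩
  exact Subtype.ext (Subtype.ext (wt_eq_zero_iff.mp c.2))

lemma card_dualCode_inf_vanishingOn_compl_mul_card [Finite K] (C : Submodule K (ι → K))
    (T : Finset ι) :
    Nat.card ↥(dualCode C ⊓ vanishingOn K (T : Set ι)ᶜ) * Nat.card C =
      Nat.card K ^ T.card * Nat.card ↥(C ⊓ vanishingOn K (T : Set ι)) := by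
  simp only [Module.natCard_eq_pow_finrank (K := K) (V := ↥(_ : Submodule K (ι → K))),
    ← pow_add, finrank_dualCode_inf_vanishingOn_compl_add_finrank]

lemma sum_card_inf_vanishingOn [Finite K] (C : Submodule K (ι → K)) (t : ℕ) :
    ∑ T ∈ powersetCard t (univ : Finset ι), Nat.card ↥(C ⊓ vanishingOn K (T : Set ι)) =
      ∑ w ∈ range (Fintype.card ι + 1), numwt C w * (Fintype.card ι - w).choose t := by
  classical
  have : Fintype K := Fintype.ofFinite K
  have hcard (T : Finset ι) : Nat.card ↥(C ⊓ vanishingOn K (T : Set ι)) =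
      #{c : C | ∀ i ∈ T, (c : ι → K) i = 0} := by
    rw [← Fintype.card_subtype, ← Nat.card_eq_fintype_card]
    refine Nat.card_congr ((Equiv.subtypeSubtypeEquivSubtypeInter (· ∈ C) _).symm.trans
      (Equiv.subtypeEquivRight fun c => ?_))
    simp
  have hsubsets (c : C) : #{T ∈ powersetCard t univ | ∀ i ∈ T, (c : ι → K) i = 0} =
      (Fintype.card ι - wt (c : ι → K)).choose t := by
    rw [← card_filter_eq_zero, ← Finset.card_powersetCard]
    congr 1
    ext T
    simp [Finset.subset_iff, and_comm]
  have hfibres (w : ℕ) : numwt C w = #{c : C | wt (c : ι → K) = w} := by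
    rw [numwt, Nat.card_eq_fintype_card, Fintype.card_subtype]
  calc ∑ T ∈ powersetCard t (univ : Finset ι), Nat.card ↥(C ⊓ vanishingOn K (T : Set ι))
      = ∑ c : C, #{T ∈ powersetCard t univ | ∀ i ∈ T, (c : ι → K) i = 0} := by
        simp only [hcard, Finset.card_filter]
        exact Finset.sum_comm
    _ = ∑ c : C, (Fintype.card ι - wt (c : ι → K)).choose t := by simp only [hsubsets]
    _ = ∑ w ∈ range (Fintype.card ι + 1), numwt C w * (Fintype.card ι - w).choose t := by
        rw [← Finset.sum_fiberwise_of_maps_to (g := fun c : C => wt (c : ι → K))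
          fun c _ => Finset.mem_range_succ_iff.mpr (wt_le_card _)]
        refine Finset.sum_congr rfl fun w _ => ?_
        rw [hfibres, ← smul_eq_mul, ← Finset.sum_const]
        exact Finset.sum_congr rfl fun c hc => by rw [(Finset.mem_filter.mp hc).2]

theorem sum_card_dualCode_inf_vanishingOn_compl_mul_card [Finite K] (C : Submodule K (ι → K))
    (t : ℕ) :
    (∑ T ∈ powersetCard t (univ : Finset ι),
        Nat.card ↥(dualCode C ⊓ vanishingOn K (T : Set ι)ᶜ)) * Nat.card C =
      Nat.card K ^ t *
        ∑ w ∈ range (Fintype.card ι + 1), numwt C w * (Fintype.card ι - w).choose t := by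
  rw [Finset.sum_mul, ← sum_card_inf_vanishingOn, Finset.mul_sum]
  refine Finset.sum_congr rfl fun T hT => ?_
  rw [card_dualCode_inf_vanishingOn_compl_mul_card, (Finset.mem_powersetCard.mp hT).2]

end Counting

lemma Submodule.one_lt_card_iff_exists_ne_zero {R V : Type*} [Semiring R] [AddCommMonoid V]
    [Module R V] (p : Submodule R V) [Finite p] : 1 < Nat.card p ↔ ∃ x ∈ p, x ≠ 0 := by
  rw [Finite.one_lt_card_iff_nontrivial, Submodule.nontrivial_iff_ne_bot, Submodule.ne_bot_iff]

section DualDistance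

variable {K : Type*} [Field K] {ι : Type*} [Fintype ι]

lemma wt_le_card_of_mem_vanishingOn_compl {v : ι → K} {T : Finset ι}
    (hv : v ∈ vanishingOn K (T : Set ι)ᶜ) : wt v ≤ #T := by
  classical
  rw [wt_eq_card_filter]
  refine Finset.card_le_card fun i hi => ?_
  by_contra hiT
  exact (Finset.mem_filter.mp hi).2 (mem_vanishingOn.mp hv i hiT)

lemma exists_mem_vanishingOn_compl_of_wt_le {v : ι → K} {t : ℕ} (hv : wt v ≤ t)
    (ht : t ≤ Fintype.card ι) :
    ∃ T ∈ powersetCard t (univ : Finset ι), v ∈ vanishingOn K (T : Set ι)ᶜ := by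
  classical
  obtain ⟨T, hsupp, -, hT⟩ := Finset.exists_subsuperset_card_eq
    (Finset.subset_univ {i | v i ≠ 0}) (wt_eq_card_filter v ▸ hv) (by rwa [Finset.card_univ])
  refine ⟨T, Finset.mem_powersetCard.mpr ⟨Finset.subset_univ T, hT⟩, mem_vanishingOn.mpr ?_⟩
  intro i hi
  by_contra hvi
  exact hi (hsupp (by simpa using hvi))

variable [Finite K] (D : Submodule K (ι → K)) {t : ℕ}

theorem lt_wt_of_sum_card_inf_vanishingOn_compl_le (ht : t ≤ Fintype.card ι)
    (hsum : ∑ T ∈ powersetCard t (univ : Finset ι),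
      Nat.card ↥(D ⊓ vanishingOn K (T : Set ι)ᶜ) ≤ (Fintype.card ι).choose t)
    {v : ι → K} (hv : v ∈ D) (hv0 : v ≠ 0) : t < wt v := by
  by_contra! hle
  obtain ⟨T, hT, hvT⟩ := exists_mem_vanishingOn_compl_of_wt_le hle ht
  have hT1 : 1 < Nat.card ↥(D ⊓ vanishingOn K (T : Set ι)ᶜ) :=
    (Submodule.one_lt_card_iff_exists_ne_zero _).mpr ⟨v, ⟨hv, hvT⟩, hv0⟩
  have := Finset.sum_lt_sum (f := fun _ => 1)
    (g := fun T : Finset ι => Nat.card ↥(D ⊓ vanishingOn K (T : Set ι)ᶜ))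
    (fun T _ => Nat.card_pos) ⟨T, hT, hT1⟩
  rw [← Finset.card_eq_sum_ones, Finset.card_powersetCard, Finset.card_univ] at this
  omega

theorem exists_wt_le_of_lt_sum_card_inf_vanishingOn_compl
    (hsum : (Fintype.card ι).choose t < ∑ T ∈ powersetCard t (univ : Finset ι),
      Nat.card ↥(D ⊓ vanishingOn K (T : Set ι)ᶜ)) :
    ∃ v ∈ D, v ≠ 0 ∧ wt v ≤ t := by
  rw [← Finset.card_univ, ← Finset.card_powersetCard, Finset.card_eq_sum_ones] at hsum
  obtain ⟨T, hT, hT1⟩ := Finset.exists_lt_of_sum_lt hsum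
  obtain ⟨v, ⟨hv, hvT⟩, hv0⟩ := (Submodule.one_lt_card_iff_exists_ne_zero _).mp hT1
  exact ⟨v, hv, hv0, (Finset.mem_powersetCard.mp hT).2 ▸ wt_le_card_of_mem_vanishingOn_compl hvT⟩

end DualDistance

lemma cast_choose_mul_factorial (a k : ℕ) :
    (a.choose k : ℤ) * k.factorial = (descPochhammer ℤ k).eval (a : ℤ) := by
  rw [descPochhammer_eval_eq_descFactorial, Nat.descFactorial_eq_factorial_mul_choose]
  push_cast
  ring

lemma cast_choose_five (a : ℕ) :
    (a.choose 5 : ℤ) * 120 = a * (a - 1) * (a - 2) * (a - 3) * (a - 4) := by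
  simpa [descPochhammer_succ_eval, Nat.factorial, mul_assoc] using cast_choose_mul_factorial a 5

lemma cast_choose_six (a : ℕ) :
    (a.choose 6 : ℤ) * 720 = a * (a - 1) * (a - 2) * (a - 3) * (a - 4) * (a - 5) := by
  simpa [descPochhammer_succ_eval, Nat.factorial, mul_assoc] using cast_choose_mul_factorial a 6

/-- The binomial moment `∑_{c ∈ C} (2s² - wt c).choose t`, `t > 0`, of a code with the weight
distribution of the theorem, where `2^(m-1) = s²`; the all-ones word contributes `0.choose t = 0`. -/
def apnBinomialMoment (s t : ℕ) : ℕ :=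
  (2 * s ^ 2).choose t + (2 * s ^ 2 - 1) * s ^ 2 * ((s ^ 2 + s).choose t + (s ^ 2 - s).choose t) +
    (2 * s ^ 2 - 1) * (2 * s ^ 2 + 2) * (s ^ 2).choose t

lemma cast_apnBinomialMoment (s t : ℕ) (hs : 0 < s) :
    (apnBinomialMoment s t : ℤ) = ((2 * s ^ 2).choose t : ℤ) +
      (2 * s ^ 2 - 1) * s ^ 2 * (((s ^ 2 + s).choose t : ℤ) + ((s ^ 2 - s).choose t : ℤ)) +
      (2 * s ^ 2 - 1) * (2 * s ^ 2 + 2) * ((s ^ 2).choose t : ℤ) := by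
  have : 1 ≤ 2 * s ^ 2 := Nat.one_le_iff_ne_zero.mpr (by positivity)
  simp [apnBinomialMoment, Nat.cast_sub this]

lemma apnBinomialMoment_five (s : ℕ) (hs : 0 < s) :
    2 ^ 5 * apnBinomialMoment s 5 = 8 * s ^ 4 * (2 * s ^ 2).choose 5 := by
  have hss : s ≤ s ^ 2 := Nat.le_self_pow two_ne_zero s
  zify
  rw [cast_apnBinomialMoment s 5 hs]
  have e1 := cast_choose_five (2 * s ^ 2)
  have e2 := cast_choose_five (s ^ 2 + s)
  have e3 := cast_choose_five (s ^ 2)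
  have e4 := cast_choose_five (s ^ 2 - s)
  push_cast [Nat.cast_sub hss] at e1 e2 e3 e4 ⊢
  refine mul_left_cancel₀ (show (120 : ℤ) ≠ 0 by norm_num) ?_
  linear_combination (32 - 8 * (s : ℤ) ^ 4) * e1 +
    32 * (2 * (s : ℤ) ^ 2 - 1) * s ^ 2 * (e2 + e4) +
    32 * (2 * (s : ℤ) ^ 2 - 1) * (2 * s ^ 2 + 2) * e3

lemma apnBinomialMoment_six (s : ℕ) (hs : 3 ≤ s) :
    8 * s ^ 4 * (2 * s ^ 2).choose 6 < 2 ^ 6 * apnBinomialMoment s 6 := by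
  have hss : s ≤ s ^ 2 := Nat.le_self_pow two_ne_zero s
  zify
  rw [cast_apnBinomialMoment s 6 (by omega)]
  have e1 := cast_choose_six (2 * s ^ 2)
  have e2 := cast_choose_six (s ^ 2 + s)
  have e3 := cast_choose_six (s ^ 2)
  have e4 := cast_choose_six (s ^ 2 - s)
  push_cast [Nat.cast_sub hss] at e1 e2 e3 e4 ⊢
  have hs' : (3 : ℤ) ≤ s := by exact_mod_cast hs
  -- `720 · (2⁶ · apnBinomialMoment s 6 - 8s⁴ · (2s²).choose 6)` factors as this polynomial.
  have hpos : 0 < 64 * (s : ℤ) ^ 6 * (s ^ 2 - 4) * (2 * s ^ 2 - 1) * (s ^ 2 - 1) := by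
    have : (0 : ℤ) < s ^ 2 - 4 := by nlinarith
    have : (0 : ℤ) < 2 * s ^ 2 - 1 := by nlinarith
    have : (0 : ℤ) < s ^ 2 - 1 := by nlinarith
    positivity
  refine lt_of_mul_lt_mul_left (a := (720 : ℤ)) ?_ (by norm_num)
  linear_combination (8 * (s : ℤ) ^ 4 - 64) * e1 -
    64 * (2 * (s : ℤ) ^ 2 - 1) * s ^ 2 * (e2 + e4) -
    64 * (2 * (s : ℤ) ^ 2 - 1) * (2 * s ^ 2 + 2) * e3 + hpos

lemma sum_numwt_mul_choose_eq_apnBinomialMoment {K : Type*} [Field K] {ι : Type*} [Fintype ι]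
    (C : Submodule K (ι → K)) {s t : ℕ} (hs : 2 ≤ s) (ht : 0 < t)
    (hι : Fintype.card ι = 2 * s ^ 2)
    (h0 : ∀ w : ℕ, w ≠ 0 → w ≠ s ^ 2 - s → w ≠ s ^ 2 → w ≠ s ^ 2 + s → w ≠ 2 * s ^ 2 →
      numwt C w = 0)
    (h1 : numwt C (s ^ 2 - s) = (2 * s ^ 2 - 1) * s ^ 2)
    (h2 : numwt C (s ^ 2) = (2 * s ^ 2 - 1) * (2 * s ^ 2 + 2))
    (h3 : numwt C (s ^ 2 + s) = (2 * s ^ 2 - 1) * s ^ 2) :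
    ∑ w ∈ range (Fintype.card ι + 1), numwt C w * (Fintype.card ι - w).choose t =
      apnBinomialMoment s t := by
  have hss : 2 * s ≤ s ^ 2 := by nlinarith
  rw [hι, ← Finset.sum_subset (s₁ := {0, s ^ 2 - s, s ^ 2, s ^ 2 + s, 2 * s ^ 2})]
  · rw [Finset.sum_insert (by simp; omega), Finset.sum_insert (by simp; omega),
      Finset.sum_insert (by simp; omega), Finset.sum_insert (by simp; omega),
      Finset.sum_singleton, numwt_zero, Nat.sub_zero, h1, h2, h3, Nat.sub_self,
      Nat.choose_eq_zero_of_lt ht,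
      show 2 * s ^ 2 - (s ^ 2 - s) = s ^ 2 + s by omega, show 2 * s ^ 2 - s ^ 2 = s ^ 2 by omega,
      show 2 * s ^ 2 - (s ^ 2 + s) = s ^ 2 - s by omega, apnBinomialMoment]
    ring
  · intro w hw
    simp only [Finset.mem_insert, Finset.mem_singleton] at hw
    rw [Finset.mem_range]
    omega
  · intro w _ hw
    simp only [Finset.mem_insert, Finset.mem_singleton, not_or] at hw
    rw [h0 w hw.1 hw.2.1 hw.2.2.1 hw.2.2.2.1 hw.2.2.2.2, zero_mul]

theorem dualCode_minDist_eq_six {ι : Type*} [Fintype ι] (C : Submodule (ZMod 2) (ι → ZMod 2))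
    {s : ℕ} (hs : 3 ≤ s) (hι : Fintype.card ι = 2 * s ^ 2) (hC : Nat.card C = 8 * s ^ 4)
    (h0 : ∀ w : ℕ, w ≠ 0 → w ≠ s ^ 2 - s → w ≠ s ^ 2 → w ≠ s ^ 2 + s → w ≠ 2 * s ^ 2 →
      numwt C w = 0)
    (h1 : numwt C (s ^ 2 - s) = (2 * s ^ 2 - 1) * s ^ 2)
    (h2 : numwt C (s ^ 2) = (2 * s ^ 2 - 1) * (2 * s ^ 2 + 2))
    (h3 : numwt C (s ^ 2 + s) = (2 * s ^ 2 - 1) * s ^ 2) :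
    (∀ c ∈ dualCode C, c ≠ 0 → 6 ≤ wt c) ∧ ∃ c ∈ dualCode C, wt c = 6 := by
  have hmoment (t : ℕ) (ht : 0 < t) :
      (∑ T ∈ powersetCard t (univ : Finset ι), Nat.card
        ↥(dualCode C ⊓ vanishingOn (ZMod 2) (T : Set ι)ᶜ)) *
        (8 * s ^ 4) = 2 ^ t * apnBinomialMoment s t := by
    rw [← hC, sum_card_dualCode_inf_vanishingOn_compl_mul_card, Nat.card_zmod,
      sum_numwt_mul_choose_eq_apnBinomialMoment C (by omega) ht hι h0 h1 h2 h3]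
  have hpos : 0 < 8 * s ^ 4 := by positivity
  have hmin : ∀ c ∈ dualCode C, c ≠ 0 → 6 ≤ wt c := by
    refine fun c hc hc0 =>
      lt_wt_of_sum_card_inf_vanishingOn_compl_le _ (by rw [hι]; nlinarith) (le_of_eq ?_) hc hc0
    refine Nat.eq_of_mul_eq_mul_right hpos ?_
    rw [hmoment 5 (by norm_num), apnBinomialMoment_five s (by omega), hι, mul_comm]
  obtain ⟨v, hv, hv0, hwt⟩ := exists_wt_le_of_lt_sum_card_inf_vanishingOn_compl (dualCode C)
    (t := 6) (Nat.lt_of_mul_lt_mul_right (a := 8 * s ^ 4) (by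
      rw [hmoment 6 (by norm_num), hι, mul_comm]
      exact apnBinomialMoment_six s hs))
  exact ⟨hmin, v, hv, le_antisymm hwt (hmin v hv hv0)⟩

theorem stmt_13_general (m : ℕ) (hm : 5 ≤ m) (hmodd : Odd m)
    (C : Submodule (ZMod 2) (Fin (2 ^ m) → ZMod 2))
    (hdim : Module.finrank (ZMod 2) C = 2 * m + 1)
    (h1 : numwt C (2 ^ (m - 1) - 2 ^ ((m - 1) / 2)) = (2 ^ m - 1) * 2 ^ (m - 1))
    (h2 : numwt C (2 ^ (m - 1)) = (2 ^ m - 1) * (2 ^ (m + 1) - 2 ^ m + 2))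
    (h3 : numwt C (2 ^ (m - 1) + 2 ^ ((m - 1) / 2)) = (2 ^ m - 1) * 2 ^ (m - 1))
    (h0 : ∀ w : ℕ, w ≠ 0 → w ≠ 2 ^ (m - 1) - 2 ^ ((m - 1) / 2) →
      w ≠ 2 ^ (m - 1) → w ≠ 2 ^ (m - 1) + 2 ^ ((m - 1) / 2) → w ≠ 2 ^ m →
      numwt C w = 0) :
    Module.finrank (ZMod 2) (dualCode C) = 2 ^ m - 2 * m - 1 ∧
    (∀ c ∈ dualCode C, c ≠ 0 → 6 ≤ wt c) ∧
    (∃ c ∈ dualCode C, wt c = 6) := by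
  obtain ⟨r, hr⟩ := hmodd
  set s := 2 ^ ((m - 1) / 2) with hs
  have hsq : 2 ^ (m - 1) = s ^ 2 := by
    rw [hs, ← pow_mul, show (m - 1) / 2 * 2 = m - 1 by omega]
  have hn : 2 ^ m = 2 * s ^ 2 := by
    rw [← hsq, ← pow_succ', show m - 1 + 1 = m by omega]
  have hs4 : 4 ≤ s := Nat.pow_le_pow_right two_pos (by omega : 2 ≤ (m - 1) / 2)
  have hC : Nat.card C = 8 * s ^ 4 := by
    rw [Module.natCard_eq_pow_finrank (K := ZMod 2), hdim, Nat.card_zmod, pow_succ, pow_mul', hn]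
    ring
  have hdual := finrank_dualCode_add_finrank C
  rw [Fintype.card_fin, hdim] at hdual
  refine ⟨by omega, dualCode_minDist_eq_six C (by omega) (by rw [Fintype.card_fin, hn]) hC
    ?_ ?_ ?_ ?_⟩
  · intro w hw0 hw1 hw2 hw3 hw4
    exact h0 w hw0 (by rwa [hsq]) (by rwa [hsq]) (by rwa [hsq]) (by rwa [hn])
  · rw [← hsq, h1, hn, hsq]
  · rw [← hsq, h2, show 2 ^ (m + 1) - 2 ^ m + 2 = 2 ^ m + 2 by rw [pow_succ]; omega, hn, hsq]
  · rw [← hsq, h3, hn, hsq]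

theorem stmt_13 (m : ℕ) (hm : 5 ≤ m) (hmodd : Odd m)
    (C : Submodule (ZMod 2) (Fin (2 ^ m) → ZMod 2))
    (hdim : Module.finrank (ZMod 2) C = 2 * m + 1)
    (h1 : numwt C (2 ^ (m - 1) - 2 ^ ((m - 1) / 2)) = (2 ^ m - 1) * 2 ^ (m - 1))
    (h2 : numwt C (2 ^ (m - 1)) = (2 ^ m - 1) * (2 ^ (m + 1) - 2 ^ m + 2))
    (h3 : numwt C (2 ^ (m - 1) + 2 ^ ((m - 1) / 2)) = (2 ^ m - 1) * 2 ^ (m - 1))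
    (h4 : numwt C (2 ^ m) = 1)
    (h0 : ∀ w : ℕ, w ≠ 0 → w ≠ 2 ^ (m - 1) - 2 ^ ((m - 1) / 2) →
      w ≠ 2 ^ (m - 1) → w ≠ 2 ^ (m - 1) + 2 ^ ((m - 1) / 2) → w ≠ 2 ^ m →
      numwt C w = 0) :
    Module.finrank (ZMod 2) (dualCode C) = 2 ^ m - 2 * m - 1 ∧
    (∀ c ∈ dualCode C, c ≠ 0 → 6 ≤ wt c) ∧
    (∃ c ∈ dualCode C, wt c = 6) :=
  stmt_13_general m hm hmodd C hdim h1 h2 h3 h0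
end
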